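/- arXiv:1406.0762 — 5 statements merged into one kernel-verified Lean document; each statement's English description precedes it below -/
import Mathlib

section
/- Let ⟨f,g⟩_∇ = c∬_Ω ∇f·∇g W dxdy be the gradient bilinear form on bivariate polynomials for a product weight W, and let ⟨f,g⟩_S = ⟨f,g⟩_∇ + λ f(c₁,c₂)g(c₁,c₂) with λ > 0. If {S_k^n : 0 ≤ k ≤ n} is a monic orthogonal basis of degree-n polynomials for ⟨·,·⟩_∇ (orthogonal to all polynomials of degree < n), then the polynomials 𝖲_k^n(x,y) := S_k^n(x,y) - S_k^n(c₁,c₂) for n ≥ 1, together with 𝖲_0^0 = 1, form a monic orthogonal basis with respect to ⟨·,·⟩_S. -/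
/-!
Subtracting the constant `S_k^n(c₁,c₂)` does not change the leading part of `S_k^n`, and
`⟨·,·⟩_∇` is additive and kills constants, so it does not see the shift either. The shifted
polynomial vanishes at `(c₁,c₂)`, so the point-evaluation term of `⟨·,·⟩_S` drops out.
-/

open MvPolynomial

namespace MvPolynomial

variable {σ R : Type*} [CommRing R]

theorem totalDegree_sub_C_sub_le (p q : MvPolynomial σ R) (r : R) :
    (p - C r - q).totalDegree ≤ (p - q).totalDegree := by
  rw [sub_right_comm]
  exact totalDegree_sub_C_le _ _

theorem eval_sub_C_eval_self (x : σ → R) (p : MvPolynomial σ R) :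
    eval x (p - C (eval x p)) = 0 := by
  rw [map_sub, eval_C, sub_self]

theorem apply_sub_C_of_additive {M : Type*} [AddMonoid M]
    {B : MvPolynomial σ R → MvPolynomial σ R → M}
    (hadd : ∀ f g h, B (f + g) h = B f h + B g h) (hconst : ∀ r g, B (C r) g = 0)
    (f g : MvPolynomial σ R) (r : R) : B (f - C r) g = B f g := by
  conv_rhs => rw [← sub_add_cancel f (C r), hadd, hconst, add_zero]

end MvPolynomial

theorem sobolev_basis_from_gradient_basis_general
    (B : MvPolynomial (Fin 2) ℝ → MvPolynomial (Fin 2) ℝ → ℝ)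
    (haddl : ∀ f g h, B (f + g) h = B f h + B g h)
    (hconst : ∀ (r : ℝ) (g : MvPolynomial (Fin 2) ℝ), B (C r) g = 0)
    (lam : ℝ) (c₁ c₂ : ℝ)
    (ev : MvPolynomial (Fin 2) ℝ → ℝ)
    (hev : ev = MvPolynomial.eval (fun i : Fin 2 => if i = 0 then c₁ else c₂))
    (S : ℕ → ℕ → MvPolynomial (Fin 2) ℝ)
    (hmonic : ∀ n, 1 ≤ n → ∀ k, k ≤ n →
      (S n k - X 0 ^ (n - k) * X 1 ^ k).totalDegree < n)
    (horth : ∀ n, 1 ≤ n → ∀ k, k ≤ n →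
      ∀ Q : MvPolynomial (Fin 2) ℝ, Q.totalDegree < n → B (S n k) Q = 0) :
    -- the shifted polynomials `𝖲_k^n = S_k^n - S_k^n(c₁,c₂)` are monic and
    -- orthogonal of degree `n` for the Sobolev inner product:
    (∀ n, 1 ≤ n → ∀ k, k ≤ n →
      ((S n k - C (ev (S n k))) - X 0 ^ (n - k) * X 1 ^ k).totalDegree < n) ∧
    (∀ n, 1 ≤ n → ∀ k, k ≤ n → ∀ Q : MvPolynomial (Fin 2) ℝ, Q.totalDegree < n →
      B (S n k - C (ev (S n k))) Q
        + lam * ev (S n k - C (ev (S n k))) * ev Q = 0) ∧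
    -- and `𝖲_0^0 = 1` is orthogonal to every `𝖲_k^n`, `n ≥ 1`:
    (∀ n, 1 ≤ n → ∀ k, k ≤ n →
      B ((1 : MvPolynomial (Fin 2) ℝ)) (S n k - C (ev (S n k)))
        + lam * ev (1 : MvPolynomial (Fin 2) ℝ) * ev (S n k - C (ev (S n k))) = 0) := by
  subst hev
  refine ⟨fun n hn k hk => (totalDegree_sub_C_sub_le _ _ _).trans_lt (hmonic n hn k hk),
    fun n hn k hk Q hQ => ?_, fun n _ k _ => ?_⟩
  · rw [apply_sub_C_of_additive haddl hconst, horth n hn k hk Q hQ, eval_sub_C_eval_self,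
      mul_zero, zero_mul, add_zero]
  · rw [← C_1, hconst, eval_sub_C_eval_self, mul_zero, add_zero]

/-- If `{S_k^n}` is a monic orthogonal basis for the gradient bilinear form `B = ⟨·,·⟩_∇`
(each `S_k^n` being orthogonal to all polynomials of total degree `< n`), then the
polynomials `𝖲_k^n = S_k^n - S_k^n(c₁,c₂)` (for `n ≥ 1`) are orthogonal of degree `n` for
the Sobolev inner product `⟨f,g⟩_S = ⟨f,g⟩_∇ + λ f(c₁,c₂)g(c₁,c₂)`; together with
`𝖲_0^0 = 1` they form a monic orthogonal basis for `⟨·,·⟩_S`. -/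
theorem sobolev_basis_from_gradient_basis
    (B : MvPolynomial (Fin 2) ℝ → MvPolynomial (Fin 2) ℝ → ℝ)
    (hsymm : ∀ f g, B f g = B g f)
    (haddl : ∀ f g h, B (f + g) h = B f h + B g h)
    (hsmull : ∀ (r : ℝ) f g, B (r • f) g = r * B f g)
    (hconst : ∀ (r : ℝ) (g : MvPolynomial (Fin 2) ℝ), B (C r) g = 0)
    (lam : ℝ) (hlam : 0 < lam) (c₁ c₂ : ℝ)
    (ev : MvPolynomial (Fin 2) ℝ → ℝ)
    (hev : ev = MvPolynomial.eval (fun i : Fin 2 => if i = 0 then c₁ else c₂))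
    (S : ℕ → ℕ → MvPolynomial (Fin 2) ℝ)
    (hmonic : ∀ n, 1 ≤ n → ∀ k, k ≤ n →
      (S n k - X 0 ^ (n - k) * X 1 ^ k).totalDegree < n)
    (horth : ∀ n, 1 ≤ n → ∀ k, k ≤ n →
      ∀ Q : MvPolynomial (Fin 2) ℝ, Q.totalDegree < n → B (S n k) Q = 0) :
    -- the shifted polynomials `𝖲_k^n = S_k^n - S_k^n(c₁,c₂)` are monic and
    -- orthogonal of degree `n` for the Sobolev inner product:
    (∀ n, 1 ≤ n → ∀ k, k ≤ n →
      ((S n k - C (ev (S n k))) - X 0 ^ (n - k) * X 1 ^ k).totalDegree < n) ∧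
    (∀ n, 1 ≤ n → ∀ k, k ≤ n → ∀ Q : MvPolynomial (Fin 2) ℝ, Q.totalDegree < n →
      B (S n k - C (ev (S n k))) Q
        + lam * ev (S n k - C (ev (S n k))) * ev Q = 0) ∧
    -- and `𝖲_0^0 = 1` is orthogonal to every `𝖲_k^n`, `n ≥ 1`:
    (∀ n, 1 ≤ n → ∀ k, k ≤ n →
      B ((1 : MvPolynomial (Fin 2) ℝ)) (S n k - C (ev (S n k)))
        + lam * ev (1 : MvPolynomial (Fin 2) ℝ) * ev (S n k - C (ev (S n k))) = 0) :=
  sobolev_basis_from_gradient_basis_general B haddl hconst lam c₁ c₂ ev hev S hmonic horth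
end

section
/- For the product Laguerre weight W_{α,β}(x,y) = x^α e^{-x} y^β e^{-y} on [0,∞)², the polynomial Q_0^n(x,y) := q_n(w_α;x) (with q_n(w_α;x) = p_n(w_α;x) + n p_{n-1}(w_α;x)) satisfies ⟨Q_0^n, P⟩_∇ = 0 for every polynomial P of total degree at most n-1, where ⟨f,g⟩_∇ = c_{α,β} ∬ ∇f·∇g W_{α,β} dx dy. -/
open Finset MeasureTheory

/-- The classical Laguerre polynomial. -/
noncomputable def laguerre (α : ℝ) (n : ℕ) (x : ℝ) : ℝ :=
  ∑ k ∈ Finset.range (n + 1),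
    (-1) ^ k * (Real.Gamma ((n : ℝ) + α + 1) /
      (Real.Gamma ((k : ℝ) + α + 1) * (n - k).factorial)) * x ^ k / k.factorial

/-- The monic Laguerre polynomial `p_n(w_α;x) = (-1)^n n! L_n^α(x)`. -/
noncomputable def lagMonic (α : ℝ) (n : ℕ) (x : ℝ) : ℝ :=
  (-1) ^ n * n.factorial * laguerre α n x

/-- `q_n(w_α;x) = p_n(w_α;x) + n·p_{n-1}(w_α;x)`. -/
noncomputable def lagQ (α : ℝ) (n : ℕ) (x : ℝ) : ℝ :=
  lagMonic α n x + n * lagMonic α (n - 1) x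

/-- The normalized gradient bilinear form for the product Laguerre weight
`W_{α,β}(x,y) = x^α e^{-x} y^β e^{-y}` on `[0,∞)²`. -/
noncomputable def lagGrad (α β : ℝ) (f g : ℝ → ℝ → ℝ) : ℝ :=
  (1 / (Real.Gamma (α + 1) * Real.Gamma (β + 1))) *
    ∫ p in (Set.Ioi (0 : ℝ)) ×ˢ (Set.Ioi (0 : ℝ)),
      (deriv (fun t => f t p.2) p.1 * deriv (fun t => g t p.2) p.1 +
        deriv (fun t => f p.1 t) p.2 * deriv (fun t => g p.1 t) p.2) *
      (Real.rpow p.1 α * Real.exp (-p.1) * (Real.rpow p.2 β * Real.exp (-p.2)))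

/-- Evaluation of a bivariate polynomial as a function of two real variables. -/
noncomputable def pev (P : MvPolynomial (Fin 2) ℝ) (x y : ℝ) : ℝ :=
  MvPolynomial.eval ![x, y] P

/-- The product monic Laguerre polynomials `P_k^n(x,y) = p_{n-k}(w_α;x) p_k(w_β;y)`. -/
noncomputable def lagP (α β : ℝ) (n k : ℕ) (x y : ℝ) : ℝ :=
  lagMonic α (n - k) x * lagMonic β k y

/-- The polynomials `Q_k^n(x,y) = q_{n-k}(w_α;x) q_k(w_β;y)`. -/
noncomputable def lagQ2 (α β : ℝ) (n k : ℕ) (x y : ℝ) : ℝ :=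
  lagQ α (n - k) x * lagQ β k y

/-- `h_k^m = (m-k)!·k!·(α+1)_{m-k}·(β+1)_k`. -/
noncomputable def hkn (α β : ℝ) (k m : ℕ) : ℝ :=
  ((m - k).factorial : ℝ) * k.factorial *
    (ascPochhammer ℝ (m - k)).eval (α + 1) * (ascPochhammer ℝ k).eval (β + 1)

/-!
Since `q_n` does not depend on `y`, only `∂ₓ` contributes, and the identity
`(L_n^α - L_{n-1}^α)' = -L_{n-1}^α` gives `q_n' = n p_{n-1}`. Thus the form equals
`n c ∬ p_{n-1}(x) ∂ₓP(x,y) W_{α,β}`, where every monomial `x^a y^b` of `∂ₓP` has `a < n - 1`.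
By Fubini each monomial contributes a multiple of `∫ p_{n-1} x^a w_α`, which vanishes: with the
moments `∫ x^j w_α = Γ(j+α+1)` it becomes a multiple of the `(n-1)`-st finite difference
`∑ (-1)^k C(n-1,k) (k+α+1)_a` of a polynomial of degree `a < n - 1`.
-/

open Polynomial

noncomputable def laguerreWeight (α x : ℝ) : ℝ := x ^ α * Real.exp (-x)

theorem natCast_add_add_one_pos {α : ℝ} (hα : -1 < α) (j : ℕ) : 0 < (j : ℝ) + α + 1 := by
  linarith [j.cast_nonneg (α := ℝ)]

theorem pow_mul_laguerreWeight_eqOn (α : ℝ) (j : ℕ) :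
    Set.EqOn (fun x => x ^ j * laguerreWeight α x)
      (fun x => Real.exp (-x) * x ^ ((j + α + 1) - 1)) (Set.Ioi 0) := by
  intro x (hx : 0 < x)
  simp only [laguerreWeight, add_sub_cancel_right, Real.rpow_add hx, Real.rpow_natCast]
  ring

theorem integrableOn_pow_mul_laguerreWeight {α : ℝ} (hα : -1 < α) (j : ℕ) :
    IntegrableOn (fun x => x ^ j * laguerreWeight α x) (Set.Ioi 0) :=
  (Real.GammaIntegral_convergent (natCast_add_add_one_pos hα j)).congr_fun
    (pow_mul_laguerreWeight_eqOn α j).symm measurableSet_Ioi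

theorem integral_pow_mul_laguerreWeight {α : ℝ} (hα : -1 < α) (j : ℕ) :
    ∫ x in Set.Ioi 0, x ^ j * laguerreWeight α x = Real.Gamma (j + α + 1) := by
  rw [Real.Gamma_eq_integral (natCast_add_add_one_pos hα j)]
  exact setIntegral_congr_fun measurableSet_Ioi (pow_mul_laguerreWeight_eqOn α j)

theorem integrableOn_eval_mul_laguerreWeight {α : ℝ} (hα : -1 < α) (p : ℝ[X]) :
    IntegrableOn (fun x => p.eval x * laguerreWeight α x) (Set.Ioi 0) := by
  simp_rw [eval_eq_sum_range, Finset.sum_mul, mul_assoc]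
  exact integrable_finsetSum _ fun k _ => (integrableOn_pow_mul_laguerreWeight hα k).const_mul _

theorem Real.Gamma_add_nat_eq_eval_ascPochhammer_mul {x : ℝ} (hx : 0 < x) (j : ℕ) :
    Real.Gamma (x + j) = (ascPochhammer ℝ j).eval x * Real.Gamma x := by
  induction j with
  | zero => simp
  | succ j ih =>
    rw [Nat.cast_succ, ← add_assoc, Real.Gamma_add_one (by positivity), ih,
      ascPochhammer_succ_right, eval_mul, eval_add, eval_X, eval_natCast]
    ring

theorem Polynomial.sum_range_alternating_choose_mul_eval_eq_zero {R : Type*} [CommRing R]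
    {P : R[X]} {m : ℕ} (hP : P.natDegree < m) :
    ∑ k ∈ Finset.range (m + 1), (-1) ^ k * (m.choose k : R) * P.eval (k : R) = 0 := by
  have h := congr_fun (fwdDiff_iter_eq_zero_of_degree_lt hP) 0
  rw [fwdDiff_iter_eq_sum_shift, Pi.zero_apply] at h
  rw [← neg_one_pow_mul_eq_zero_iff (n := m), Finset.mul_sum, ← h]
  refine Finset.sum_congr rfl fun k hk => ?_
  have hkm : k ≤ m := Nat.lt_succ_iff.mp (Finset.mem_range.mp hk)
  rw [zsmul_eq_mul, zero_add, nsmul_one, ← mul_assoc, ← mul_assoc, ← pow_add]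
  push_cast
  rw [show m + k = (m - k) + 2 * k by omega, pow_add, pow_mul]
  simp

noncomputable def laguerreCoeff (α : ℝ) (n k : ℕ) : ℝ :=
  (-1) ^ k * (Real.Gamma ((n : ℝ) + α + 1) /
    (Real.Gamma ((k : ℝ) + α + 1) * (n - k).factorial)) / k.factorial

theorem laguerre_eq_sum (α : ℝ) (n : ℕ) (x : ℝ) :
    laguerre α n x = ∑ k ∈ range (n + 1), laguerreCoeff α n k * x ^ k :=
  sum_congr rfl fun k _ => by rw [laguerreCoeff]; ring

noncomputable def laguerrePoly (α : ℝ) (n : ℕ) : ℝ[X] :=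
  ∑ k ∈ range (n + 1), C (laguerreCoeff α n k) * X ^ k

theorem eval_laguerrePoly (α : ℝ) (n : ℕ) (x : ℝ) :
    (laguerrePoly α n).eval x = laguerre α n x := by
  simp [laguerrePoly, laguerre_eq_sum, eval_finsetSum]

theorem coeff_laguerrePoly (α : ℝ) (n k : ℕ) :
    (laguerrePoly α n).coeff k = if k ≤ n then laguerreCoeff α n k else 0 := by
  simp [laguerrePoly]

-- The coefficient of `x^k` in `(L_{m+1}^α - L_m^α)' = -L_m^α`.
theorem laguerreCoeff_succ_sub {α : ℝ} (hα : -1 < α) {m k : ℕ} (hk : k ≤ m) :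
    (laguerreCoeff α (m + 1) (k + 1) - if k + 1 ≤ m then laguerreCoeff α m (k + 1) else 0)
      * (k + 1) = -laguerreCoeff α m k := by
  have hk0 := (natCast_add_add_one_pos hα k).ne'
  have hm0 := (natCast_add_add_one_pos hα m).ne'
  have hk1 : ((k + 1 : ℕ) : ℝ) + α + 1 = (k + α + 1) + 1 := by push_cast; ring
  have hm1 : ((m + 1 : ℕ) : ℝ) + α + 1 = (m + α + 1) + 1 := by push_cast; ring
  simp only [laguerreCoeff, hk1, hm1, Real.Gamma_add_one hk0, Real.Gamma_add_one hm0,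
    Nat.succ_sub_succ, Nat.factorial_succ k]
  rcases hk.lt_or_eq with hk | rfl
  · obtain ⟨d, rfl⟩ := Nat.exists_eq_add_of_lt hk
    rw [if_pos (by omega), show k + d + 1 - k = d + 1 by omega,
      show k + d + 1 - (k + 1) = d by omega, Nat.factorial_succ d]
    push_cast
    field_simp
    ring
  · rw [if_neg (by omega), Nat.sub_self]
    push_cast
    field_simp
    ring

theorem derivative_laguerrePoly_succ_sub {α : ℝ} (hα : -1 < α) (m : ℕ) :
    derivative (laguerrePoly α (m + 1) - laguerrePoly α m) = -laguerrePoly α m := by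
  ext k
  rw [coeff_derivative, coeff_sub, coeff_neg, coeff_laguerrePoly, coeff_laguerrePoly,
    coeff_laguerrePoly]
  by_cases hk : k ≤ m
  · rw [if_pos (by omega), if_pos hk, ← laguerreCoeff_succ_sub hα hk]
  · simp [show ¬k + 1 ≤ m + 1 by omega, show ¬k + 1 ≤ m by omega, hk]

theorem hasDerivAt_lagQ_succ {α : ℝ} (hα : -1 < α) (m : ℕ) (x : ℝ) :
    HasDerivAt (lagQ α (m + 1)) ((m + 1) * lagMonic α m x) x := by
  have hQ : lagQ α (m + 1) = fun y => ((-1) ^ (m + 1) * (m + 1).factorial : ℝ) *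
      (laguerrePoly α (m + 1) - laguerrePoly α m).eval y := by
    ext y
    simp only [lagQ, lagMonic, eval_sub, eval_laguerrePoly, Nat.factorial_succ,
      Nat.add_sub_cancel]
    push_cast
    ring
  rw [hQ]
  refine (((laguerrePoly α (m + 1) - laguerrePoly α m).hasDerivAt x).const_mul _).congr_deriv ?_
  rw [derivative_laguerrePoly_succ_sub hα, eval_neg, eval_laguerrePoly, lagMonic,
    Nat.factorial_succ]
  push_cast
  ring

theorem laguerreCoeff_mul_Gamma {α : ℝ} (hα : -1 < α) {m k : ℕ} (hk : k ≤ m) (j : ℕ) :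
    laguerreCoeff α m k * Real.Gamma ((k + j : ℕ) + α + 1) =
      Real.Gamma (m + α + 1) / m.factorial * ((-1) ^ k * m.choose k *
        ((ascPochhammer ℝ j).comp (X + C (α + 1))).eval (k : ℝ)) := by
  have hGk := (Real.Gamma_pos_of_pos (natCast_add_add_one_pos hα k)).ne'
  rw [show ((k + j : ℕ) : ℝ) + α + 1 = (k + α + 1) + j by push_cast; ring,
    Real.Gamma_add_nat_eq_eval_ascPochhammer_mul (natCast_add_add_one_pos hα k),
    Nat.cast_choose ℝ hk, eval_comp, eval_add, eval_X, eval_C, laguerreCoeff, ← add_assoc]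
  field_simp

theorem integral_pow_mul_laguerre_mul_laguerreWeight {α : ℝ} (hα : -1 < α) {m j : ℕ}
    (hj : j < m) :
    ∫ x in Set.Ioi 0, x ^ j * (laguerre α m x * laguerreWeight α x) = 0 := by
  have hP : ((ascPochhammer ℝ j).comp (X + C (α + 1))).natDegree < m := by
    rwa [natDegree_comp, ascPochhammer_natDegree, natDegree_X_add_C, mul_one]
  calc ∫ x in Set.Ioi 0, x ^ j * (laguerre α m x * laguerreWeight α x)
      = ∑ k ∈ range (m + 1), laguerreCoeff α m k *
          ∫ x in Set.Ioi 0, x ^ (k + j) * laguerreWeight α x := by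
        simp_rw [← integral_const_mul]
        rw [← integral_finsetSum _ fun k _ =>
          (integrableOn_pow_mul_laguerreWeight hα (k + j)).const_mul _]
        refine setIntegral_congr_fun measurableSet_Ioi fun x _ => ?_
        simp only [laguerre_eq_sum, sum_mul, mul_sum, pow_add]
        exact sum_congr rfl fun k _ => by ring
    _ = Real.Gamma (m + α + 1) / m.factorial * ∑ k ∈ range (m + 1), (-1) ^ k *
          (m.choose k : ℝ) * ((ascPochhammer ℝ j).comp (X + C (α + 1))).eval (k : ℝ) := by
        rw [mul_sum]
        refine sum_congr rfl fun k hk => ?_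
        rw [integral_pow_mul_laguerreWeight hα,
          laguerreCoeff_mul_Gamma hα (Nat.lt_succ_iff.mp (mem_range.mp hk))]
    _ = 0 := by rw [sum_range_alternating_choose_mul_eval_eq_zero hP, mul_zero]

theorem integrableOn_pow_mul_lagMonic_mul_laguerreWeight {α : ℝ} (hα : -1 < α) (m a : ℕ) :
    IntegrableOn (fun x => x ^ a * (lagMonic α m x * laguerreWeight α x)) (Set.Ioi 0) :=
  (integrableOn_eval_mul_laguerreWeight hα
    (X ^ a * C ((-1) ^ m * m.factorial : ℝ) * laguerrePoly α m)).congr_fun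
    (fun x _ => by
      simp only [eval_mul, eval_pow, eval_X, eval_C, eval_laguerrePoly, lagMonic]
      ring)
    measurableSet_Ioi

theorem integral_pow_mul_lagMonic_mul_laguerreWeight {α : ℝ} (hα : -1 < α) {m j : ℕ}
    (hj : j < m) :
    ∫ x in Set.Ioi 0, x ^ j * (lagMonic α m x * laguerreWeight α x) = 0 := by
  have h : ∀ x : ℝ, x ^ j * (lagMonic α m x * laguerreWeight α x) =
      (-1) ^ m * m.factorial * (x ^ j * (laguerre α m x * laguerreWeight α x)) := fun x => by
    rw [lagMonic]; ring
  simp_rw [h, integral_const_mul, integral_pow_mul_laguerre_mul_laguerreWeight hα hj, mul_zero]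

theorem MvPolynomial.lt_totalDegree_of_mem_support_pderiv {σ R : Type*} [CommSemiring R]
    {P : MvPolynomial σ R} {i : σ} {d : σ →₀ ℕ} (hd : d ∈ (pderiv i P).support) :
    d i < P.totalDegree := by
  classical
  rw [mem_support_iff, coeff_pderiv] at hd
  calc d i < (d + Finsupp.single i 1 : σ →₀ ℕ) i := by simp
    _ ≤ Finsupp.degree (d + Finsupp.single i 1) := Finsupp.le_degree i _
    _ ≤ P.totalDegree := le_totalDegree (mem_support_iff.mpr (left_ne_zero_of_mul hd))

theorem hasDerivAt_pev_fst (P : MvPolynomial (Fin 2) ℝ) (x y : ℝ) :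
    HasDerivAt (fun t => pev P t y) (pev (MvPolynomial.pderiv 0 P) x y) x := by
  induction P using MvPolynomial.induction_on with
  | C a => simpa [pev] using hasDerivAt_const x a
  | add p q hp hq => simpa [pev] using hp.fun_add hq
  | mul_X p i hp =>
    have hX : HasDerivAt (fun t => pev (MvPolynomial.X i) t y)
        (pev (MvPolynomial.pderiv 0 (MvPolynomial.X i)) x y) x := by
      fin_cases i
      · simpa [pev] using hasDerivAt_id' x
      · simpa [pev] using hasDerivAt_const x y
    simpa only [pev, map_mul, map_add, MvPolynomial.pderiv_mul] using hp.fun_mul hX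

theorem integral_pev_mul_mul_eq_zero_of_moments {μ ν : Measure ℝ} [SFinite μ] [SFinite ν]
    {g h : ℝ → ℝ} {m : ℕ} (hg : ∀ a, Integrable (fun x => x ^ a * g x) μ)
    (hh : ∀ b, Integrable (fun y => y ^ b * h y) ν) (hmom : ∀ a < m, ∫ x, x ^ a * g x ∂μ = 0)
    {Q : MvPolynomial (Fin 2) ℝ} (hQ : ∀ d ∈ Q.support, d 0 < m) :
    ∫ p, pev Q p.1 p.2 * (g p.1 * h p.2) ∂μ.prod ν = 0 := by
  have hexp : ∀ p : ℝ × ℝ, pev Q p.1 p.2 * (g p.1 * h p.2) =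
      ∑ d ∈ Q.support, Q.coeff d * ((p.1 ^ d 0 * g p.1) * (p.2 ^ d 1 * h p.2)) := by
    intro p
    rw [pev, MvPolynomial.eval_eq', sum_mul]
    refine sum_congr rfl fun d _ => ?_
    simp only [Fin.prod_univ_two, Matrix.cons_val_zero, Matrix.cons_val_one]
    ring
  simp_rw [hexp]
  rw [integral_finsetSum _ fun d _ => ((hg _).mul_prod (hh _)).const_mul _]
  refine sum_eq_zero fun d hd => ?_
  rw [integral_const_mul, integral_prod_mul (fun x => x ^ d 0 * g x) (fun y => y ^ d 1 * h y),
    hmom _ (hQ d hd), zero_mul, mul_zero]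

theorem lagQ0_orthogonal_general (α β : ℝ) (hα : -1 < α) (hβ : -1 < β) (n : ℕ)
    (P : MvPolynomial (Fin 2) ℝ) (hP : P.totalDegree < n) :
    lagGrad α β (fun x _ => lagQ α n x) (pev P) = 0 := by
  obtain ⟨m, rfl⟩ : ∃ m, n = m + 1 := ⟨n - 1, by omega⟩
  have hintegrand : ∀ p : ℝ × ℝ,
      (deriv (fun t => lagQ α (m + 1) t) p.1 * deriv (fun t => pev P t p.2) p.1 +
        deriv (fun _ => lagQ α (m + 1) p.1) p.2 * deriv (fun t => pev P p.1 t) p.2) *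
        (Real.rpow p.1 α * Real.exp (-p.1) * (Real.rpow p.2 β * Real.exp (-p.2))) =
      (m + 1) * (pev (MvPolynomial.pderiv 0 P) p.1 p.2 *
        ((lagMonic α m p.1 * laguerreWeight α p.1) * laguerreWeight β p.2)) := by
    intro p
    rw [(hasDerivAt_lagQ_succ hα m p.1).deriv, (hasDerivAt_pev_fst P p.1 p.2).deriv,
      deriv_const]
    simp only [laguerreWeight, Real.rpow_eq_pow]
    ring
  have hdeg : ∀ d ∈ (MvPolynomial.pderiv 0 P).support, d 0 < m := fun d hd =>
    Nat.lt_of_lt_of_le (MvPolynomial.lt_totalDegree_of_mem_support_pderiv hd) (by omega)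
  rw [lagGrad, Measure.volume_eq_prod, ← Measure.prod_restrict]
  simp_rw [hintegrand, integral_const_mul]
  rw [integral_pev_mul_mul_eq_zero_of_moments
    (integrableOn_pow_mul_lagMonic_mul_laguerreWeight hα m)
    (integrableOn_pow_mul_laguerreWeight hβ)
    (fun a ha => integral_pow_mul_lagMonic_mul_laguerreWeight hα ha) hdeg, mul_zero, mul_zero]

/-- `Q_0^n(x,y) = q_n(w_α;x)` is `∇`-orthogonal to every polynomial of total degree `≤ n-1`. -/
theorem lagQ0_orthogonal (α β : ℝ) (hα : -1 < α) (hβ : -1 < β) (n : ℕ) (hn : 1 ≤ n)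
    (P : MvPolynomial (Fin 2) ℝ) (hP : P.totalDegree < n) :
    lagGrad α β (fun x _ => lagQ α n x) (pev P) = 0 :=
  lagQ0_orthogonal_general α β hα hβ n P hP
end

section
/- For the product Laguerre weight, define Q_k^n(x,y) = q_{n-k}(w_α;x) q_k(w_β;y) where q_m(w;x) = p_m(w;x) + m·p_{m-1}(w;x). Then for 1 ≤ k ≤ n-1: ∂_x Q_k^n = (n-k)[P_k^{n-1} + k·P_{k-1}^{n-2}] and ∂_y Q_k^n = k[P_{k-1}^{n-1} + (n-k)·P_{k-1}^{n-2}], where P_j^m(x,y) = p_{m-j}(w_α;x)p_j(w_β;y). -/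
open Finset MeasureTheory

/-! Since `Q_k^n` is a product of one-variable factors, both formulas reduce to
`q_m' = m p_{m-1}`, i.e. `p_m' + m p_{m-1}' = m p_{m-1}`. Comparing coefficients of `x ^ j` in the
explicit expansion of `p_m`, the Gamma-function ratios cancel against the factor `j + α + 1`, and
what remains is the binomial identity `(j+1) C(m,j+1) = (m-j) C(m,j)`. -/

noncomputable def lagMonicCoeff (α : ℝ) (m j : ℕ) : ℝ :=
  (-1) ^ (m + j) * m.choose j * (Real.Gamma (m + α + 1) / Real.Gamma (j + α + 1))

lemma lagMonic_eq_sum (α : ℝ) (m : ℕ) (x : ℝ) :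
    lagMonic α m x = ∑ j ∈ range (m + 1), lagMonicCoeff α m j * x ^ j := by
  rw [lagMonic, laguerre, mul_sum]
  refine sum_congr rfl fun j hj => ?_
  rw [lagMonicCoeff, Nat.cast_choose ℝ (Nat.lt_succ_iff.mp (mem_range.mp hj)), pow_add]
  field_simp

lemma Gamma_natCast_add_pos {α : ℝ} (hα : -1 < α) (j : ℕ) : 0 < Real.Gamma (j + α + 1) :=
  Real.Gamma_pos_of_pos (by linarith [(j.cast_nonneg : (0 : ℝ) ≤ j)])

lemma Gamma_natCast_succ_add {α : ℝ} (hα : -1 < α) (j : ℕ) :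
    Real.Gamma ((j + 1 : ℕ) + α + 1) = (j + α + 1) * Real.Gamma (j + α + 1) := by
  rw [← Real.Gamma_add_one (by linarith [(j.cast_nonneg : (0 : ℝ) ≤ j)])]
  push_cast
  ring_nf

lemma lagMonicCoeff_self {α : ℝ} (hα : -1 < α) (m : ℕ) : lagMonicCoeff α m m = 1 := by
  have hΓ := (Gamma_natCast_add_pos hα m).ne'
  rw [lagMonicCoeff, ← two_mul, pow_mul]
  simp [hΓ]

lemma lagMonicCoeff_succ_recurrence {α : ℝ} (hα : -1 < α) {m j : ℕ} (hjm : j < m) :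
    (j + 1) * lagMonicCoeff α (m + 1) (j + 1) + (m + 1) * ((j + 1) * lagMonicCoeff α m (j + 1))
      = (m + 1) * lagMonicCoeff α m j := by
  have hchoose_succ : ((m + 1).choose (j + 1) : ℝ) * (j + 1) = (m + 1) * m.choose j := by
    exact_mod_cast (Nat.add_one_mul_choose_eq m j).symm
  have hchoose_right : (m.choose (j + 1) : ℝ) * (j + 1) = m.choose j * (m - j) := by
    rw [← Nat.cast_sub hjm.le]; exact_mod_cast Nat.choose_succ_right_eq m j
  have hj : (j : ℝ) + α + 1 ≠ 0 := by linarith [(j.cast_nonneg : (0 : ℝ) ≤ j)]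
  have hΓ := (Gamma_natCast_add_pos hα j).ne'
  simp only [lagMonicCoeff, Gamma_natCast_succ_add hα]
  field_simp
  linear_combination (-1) ^ (m + j) * Real.Gamma (m + α + 1) *
    ((m + α + 1) * hchoose_succ - (m + 1) * hchoose_right)

lemma hasDerivAt_lagMonic (α : ℝ) (m : ℕ) (x : ℝ) :
    HasDerivAt (lagMonic α m)
      (∑ j ∈ range m, (j + 1) * lagMonicCoeff α m (j + 1) * x ^ j) x := by
  rw [show lagMonic α m = _ from funext (lagMonic_eq_sum α m)]
  refine (HasDerivAt.fun_sum fun j (_ : j ∈ range (m + 1)) =>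
    (hasDerivAt_pow j x).const_mul (lagMonicCoeff α m j)).congr_deriv ?_
  rw [sum_range_succ']
  simp only [Nat.cast_add, Nat.cast_one, Nat.add_sub_cancel, Nat.cast_zero, zero_mul, mul_zero,
    add_zero]
  exact sum_congr rfl fun j _ => by ring

lemma hasDerivAt_lagQ {α : ℝ} (hα : -1 < α) (m : ℕ) (x : ℝ) :
    HasDerivAt (lagQ α m) (m * lagMonic α (m - 1) x) x := by
  refine ((hasDerivAt_lagMonic α m x).add
    ((hasDerivAt_lagMonic α (m - 1) x).const_mul (m : ℝ))).congr_deriv ?_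
  cases m with
  | zero => simp
  | succ m =>
    have hterm : ∀ j ∈ range m,
        (j + 1) * lagMonicCoeff α (m + 1) (j + 1) * x ^ j
          + (m + 1) * ((j + 1) * lagMonicCoeff α m (j + 1) * x ^ j)
        = (m + 1) * (lagMonicCoeff α m j * x ^ j) := fun j hj => by
      linear_combination x ^ j * lagMonicCoeff_succ_recurrence hα (mem_range.mp hj)
    push_cast
    rw [lagMonic_eq_sum, sum_range_succ, sum_range_succ, mul_add, mul_sum,
      mul_sum, ← sum_congr rfl hterm, sum_add_distrib, lagMonicCoeff_self hα,
      lagMonicCoeff_self hα]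
    ring

theorem lagQ2_partials_general (α β : ℝ) (hα : -1 < α) (hβ : -1 < β) (n k : ℕ)
    (hk : 1 ≤ k) (hkn' : k ≤ n - 1) (x y : ℝ) :
    deriv (fun t => lagQ2 α β n k t y) x
      = ((n : ℝ) - k) * (lagP α β (n - 1) k x y + (k : ℝ) * lagP α β (n - 2) (k - 1) x y) ∧
    deriv (fun t => lagQ2 α β n k x t) y
      = (k : ℝ) * (lagP α β (n - 1) (k - 1) x y
          + ((n : ℝ) - k) * lagP α β (n - 2) (k - 1) x y) := by
  have hx := ((hasDerivAt_lagQ hα (n - k) x).mul_const (lagQ β k y)).deriv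
  have hy := ((hasDerivAt_lagQ hβ k y).const_mul (lagQ α (n - k) x)).deriv
  have hsub₁ : n - 1 - k = n - k - 1 := by omega
  have hsub₂ : n - 2 - (k - 1) = n - k - 1 := by omega
  have hsub₃ : n - 1 - (k - 1) = n - k := by omega
  have hcast : ((n - k : ℕ) : ℝ) = n - k := Nat.cast_sub (by omega)
  simp only [lagQ2]
  rw [hx, hy]
  simp only [lagP, lagQ, hsub₁, hsub₂, hsub₃, hcast]
  constructor <;> ring

/-- Partial derivatives of `Q_k^n` for `1 ≤ k ≤ n-1` in the product Laguerre setting: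
`∂_x Q_k^n = (n-k)[P_k^{n-1} + k P_{k-1}^{n-2}]` and
`∂_y Q_k^n = k[P_{k-1}^{n-1} + (n-k) P_{k-1}^{n-2}]`. -/
theorem lagQ2_partials (α β : ℝ) (hα : -1 < α) (hβ : -1 < β) (n k : ℕ)
    (hk : 1 ≤ k) (hkn' : k ≤ n - 1) (hn : 1 ≤ n) (x y : ℝ) :
    deriv (fun t => lagQ2 α β n k t y) x
      = ((n : ℝ) - k) * (lagP α β (n - 1) k x y + (k : ℝ) * lagP α β (n - 2) (k - 1) x y) ∧
    deriv (fun t => lagQ2 α β n k x t) y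
      = (k : ℝ) * (lagP α β (n - 1) (k - 1) x y
          + ((n : ℝ) - k) * lagP α β (n - 2) (k - 1) x y) :=
  lagQ2_partials_general α β hα hβ n k hk hkn' x y
end

section
/- For the product Laguerre weight, the cross Gram matrix C_n := ⟨𝕼_{n+1}, 𝕼_n^T⟩_∇ is bidiagonal with zero first and last rows: its nonzero entries are (C_n)_{i,i} = i²(n-i+1) h_{i-1}^{n-1} for 1 ≤ i ≤ n and (C_n)_{i+1,i} = (i+1)(n-i)² h_i^{n-1} for 0 ≤ i ≤ n-1, where h_k^m = (m-k)! k! (α+1)_{m-k} (β+1)_k. -/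
open Finset MeasureTheory

/-!
The weight is a product, so for `f = P₁(x)Q₁(y)` and `g = P₂(x)Q₂(y)` the gradient form splits as
`⟨P₁', P₂'⟩_α ⟨Q₁, Q₂⟩_β + ⟨P₁, P₂⟩_α ⟨Q₁', Q₂'⟩_β` in terms of the one-variable forms
`⟨P, Q⟩_α = ∫ P Q x^α e^{-x} dx / Γ(α+1)`. Since `q_m' = m p_{m-1}`, the monic Laguerre
orthogonality `⟨p_a, p_b⟩_α = δ_{ab} a! (α+1)_a` makes every derivative factor diagonal, and
`⟨q_{m+1}, q_m⟩_α = (m+1) m! (α+1)_m` because `q_{m+1} = p_{m+1} + (m+1) p_m` and `q_m` is monic.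
Orthogonality itself is a finite-difference identity: `⟨x^j, p_n⟩_α` is `(α+1)_n` times the
`n`-th forward difference at `0` of the degree-`j` polynomial `t ↦ (t+α+1)_j`.
-/

open Polynomial
open scoped Nat

open Function fwdDiff in
theorem Polynomial.sum_range_neg_one_pow_mul_choose_mul_eval {R : Type*} [CommRing R]
    (P : R[X]) {n : ℕ} (hP : P.natDegree ≤ n) :
    ∑ k ∈ range (n + 1), (-1) ^ (n + k) * (n.choose k : R) * P.eval (k : R) = n ! * P.coeff n := by
  have hΔ : (Δ_[1])^[n] P.eval 0 =
      ∑ k ∈ range (n + 1), (-1) ^ (n + k) * (n.choose k : R) * P.eval (k : R) := by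
    rw [fwdDiff_iter_eq_sum_shift]
    refine sum_congr rfl fun k hk => ?_
    have hkn : n + k = (n - k) + 2 * k := by have := mem_range.1 hk; omega
    simp [hkn, pow_add, pow_mul, zsmul_eq_mul]
  rw [← hΔ]
  rcases hP.lt_or_eq with hlt | rfl
  · rw [fwdDiff_iter_eq_zero_of_degree_lt hlt, coeff_eq_zero_of_natDegree_lt hlt]
    simp
  · rw [fwdDiff_iter_degree_eq_factorial, Pi.smul_apply, smul_eq_mul, leadingCoeff, mul_comm]
    rfl

theorem Polynomial.coeff_ascPochhammer_comp_X_add_C {R : Type*} [CommRing R] [IsDomain R]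
    {j n : ℕ} (hj : j ≤ n) (r : R) :
    ((ascPochhammer R j).comp (X + C r)).coeff n = if j = n then 1 else 0 := by
  have hmonic := (monic_ascPochhammer R j).comp_X_add_C r
  have hdeg : ((ascPochhammer R j).comp (X + C r)).natDegree = j := by
    rw [natDegree_comp, ascPochhammer_natDegree, natDegree_X_add_C, mul_one]
  split_ifs with hjn
  · rw [← hjn]
    convert hmonic.coeff_natDegree
    exact hdeg.symm
  · exact coeff_eq_zero_of_natDegree_lt (hdeg.trans_lt (lt_of_le_of_ne hj hjn))

theorem Nat.cast_choose_succ_mul (R : Type*) [Ring R] (n k : ℕ) :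
    ((n.choose (k + 1) : ℕ) : R) * (k + 1) = n.choose k * ((n : R) - k) := by
  rcases le_or_gt k n with hkn | hnk
  · have := congrArg (Nat.cast : ℕ → R) (Nat.choose_succ_right_eq n k)
    push_cast [Nat.cast_sub hkn] at this
    exact this
  · simp [Nat.choose_eq_zero_of_lt hnk, Nat.choose_eq_zero_of_lt (hnk.trans (lt_add_one k))]

theorem Real.Gamma_add_nat_eq_mul_ascPochhammer {x : ℝ} (hx : 0 < x) (k : ℕ) :
    Real.Gamma (x + k) = Real.Gamma x * (ascPochhammer ℝ k).eval x := by
  induction k with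
  | zero => simp
  | succ k ih =>
    rw [Nat.cast_succ, ← add_assoc, Real.Gamma_add_one (by positivity), ih,
      ascPochhammer_succ_eval]
    ring

theorem deriv_eval_mul_eval_left (P Q : ℝ[X]) (x y : ℝ) :
    deriv (fun t => P.eval t * Q.eval y) x = (derivative P).eval x * Q.eval y := by
  rw [deriv_mul_const P.differentiableAt, Polynomial.deriv]

theorem deriv_eval_mul_eval_right (P Q : ℝ[X]) (x y : ℝ) :
    deriv (fun t => P.eval x * Q.eval t) y = P.eval x * (derivative Q).eval y := by
  rw [deriv_const_mul _ Q.differentiableAt, Polynomial.deriv]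

section LaguerrePolynomials

variable (α : ℝ)

/-- Coefficient of `x^k` in `p_n(w_α;x)`. The sign `(-1)^(n+k)` rather than `(-1)^(n-k)` avoids
truncated subtraction; the coefficient vanishes for `k > n` through the binomial. -/
noncomputable def lagCoeff (n k : ℕ) : ℝ :=
  (-1) ^ (n + k) * n.choose k *
    ((ascPochhammer ℝ n).eval (α + 1) / (ascPochhammer ℝ k).eval (α + 1))

noncomputable def lagMonicPoly (n : ℕ) : ℝ[X] :=
  ∑ k ∈ range (n + 1), C (lagCoeff α n k) * X ^ k

noncomputable def lagQPoly (n : ℕ) : ℝ[X] :=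
  lagMonicPoly α n + C (n : ℝ) * lagMonicPoly α (n - 1)

theorem coeff_lagMonicPoly (n k : ℕ) : (lagMonicPoly α n).coeff k = lagCoeff α n k := by
  simp only [lagMonicPoly, finsetSum_coeff, coeff_C_mul_X_pow]
  rw [sum_ite_eq]
  split_ifs with hk
  · rfl
  · simp [lagCoeff, Nat.choose_eq_zero_of_lt (by simpa using hk : n < k)]

theorem natDegree_lagMonicPoly_le (n : ℕ) : (lagMonicPoly α n).natDegree ≤ n :=
  natDegree_le_iff_coeff_eq_zero.2 fun k hk => by
    simp [coeff_lagMonicPoly, lagCoeff, Nat.choose_eq_zero_of_lt (by exact_mod_cast hk : n < k)]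

theorem natDegree_lagQPoly_le (n : ℕ) : (lagQPoly α n).natDegree ≤ n :=
  natDegree_add_le_of_degree_le (natDegree_lagMonicPoly_le α n)
    (natDegree_C_mul_le _ _ |>.trans <| (natDegree_lagMonicPoly_le α _).trans (n.sub_le 1))

variable {α}

theorem ascPochhammer_eval_add_one_pos (hα : -1 < α) (n : ℕ) :
    0 < (ascPochhammer ℝ n).eval (α + 1) :=
  ascPochhammer_pos n _ (by linarith)

theorem Real.Gamma_nat_add_div_Gamma_nat_add (hα : -1 < α) (n k : ℕ) :
    Real.Gamma (n + α + 1) / Real.Gamma (k + α + 1) =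
      (ascPochhammer ℝ n).eval (α + 1) / (ascPochhammer ℝ k).eval (α + 1) := by
  have hα' : 0 < α + 1 := by linarith
  rw [show (n : ℝ) + α + 1 = α + 1 + n by ring, show (k : ℝ) + α + 1 = α + 1 + k by ring,
    Real.Gamma_add_nat_eq_mul_ascPochhammer hα', Real.Gamma_add_nat_eq_mul_ascPochhammer hα',
    mul_div_mul_left _ _ (Real.Gamma_pos_of_pos hα').ne']

theorem eval_lagMonicPoly (hα : -1 < α) (n : ℕ) (x : ℝ) :
    (lagMonicPoly α n).eval x = lagMonic α n x := by
  simp only [lagMonicPoly, lagMonic, laguerre, eval_finsetSum, eval_mul, eval_C, eval_pow, eval_X,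
    mul_sum]
  refine sum_congr rfl fun k hk => ?_
  rw [lagCoeff, ← Real.Gamma_nat_add_div_Gamma_nat_add hα,
    Nat.cast_choose ℝ (Nat.le_of_lt_succ (mem_range.1 hk)), pow_add]
  field_simp

theorem eval_lagQPoly (hα : -1 < α) (n : ℕ) (x : ℝ) : (lagQPoly α n).eval x = lagQ α n x := by
  simp [lagQPoly, lagQ, eval_lagMonicPoly hα]

theorem coeff_lagMonicPoly_self (hα : -1 < α) (n : ℕ) : (lagMonicPoly α n).coeff n = 1 := by
  have := (ascPochhammer_eval_add_one_pos hα n).ne'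
  simp [coeff_lagMonicPoly, lagCoeff, ← two_mul, pow_mul, this]

theorem coeff_lagQPoly_self (hα : -1 < α) (n : ℕ) : (lagQPoly α n).coeff n = 1 := by
  rw [lagQPoly, coeff_add, coeff_C_mul, coeff_lagMonicPoly_self hα, add_eq_left]
  rcases n with _ | n
  · simp
  · rw [Nat.add_sub_cancel, coeff_eq_zero_of_natDegree_lt
      ((natDegree_lagMonicPoly_le α n).trans_lt n.lt_succ_self), mul_zero]

theorem derivative_lagQPoly (hα : -1 < α) (n : ℕ) :
    derivative (lagQPoly α n) = C (n : ℝ) * lagMonicPoly α (n - 1) := by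
  ext k
  rcases n with _ | m
  · simp [lagQPoly, coeff_derivative, coeff_lagMonicPoly, lagCoeff]
  simp only [lagQPoly, coeff_derivative, coeff_add, coeff_C_mul, coeff_lagMonicPoly, lagCoeff,
    Nat.add_sub_cancel, ascPochhammer_succ_eval]
  have hk := (ascPochhammer_eval_add_one_pos hα k).ne'
  have hk' : α + 1 + k ≠ 0 := by linarith [k.cast_nonneg (α := ℝ)]
  have hpascal : ((m + 1).choose (k + 1) : ℝ) = m.choose k + m.choose (k + 1) := by
    exact_mod_cast Nat.choose_succ_succ m k
  rw [hpascal]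
  field_simp
  push_cast
  linear_combination ((ascPochhammer ℝ m).eval (α + 1) * (-1) ^ (m + k) * α) *
    Nat.cast_choose_succ_mul ℝ m k

end LaguerrePolynomials

section LaguerreMoments

variable {α : ℝ}

variable (α) in
/-- The moment functional of `x^α e^{-x} dx / Γ(α+1)`, defined by `X^k ↦ (α+1)_k`. -/
noncomputable def lagMoment : ℝ[X] →ₗ[ℝ] ℝ :=
  lsum fun k => (ascPochhammer ℝ k).eval (α + 1) • LinearMap.id

variable (α) in
noncomputable def lagNormSq (n : ℕ) : ℝ :=
  n ! * (ascPochhammer ℝ n).eval (α + 1)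

theorem lagMoment_monomial (k : ℕ) (a : ℝ) :
    lagMoment α (monomial k a) = a * (ascPochhammer ℝ k).eval (α + 1) := by
  simp [lagMoment, sum_monomial_index, mul_comm]

theorem lagMoment_X_pow_mul_lagMonicPoly (hα : -1 < α) {j n : ℕ} (hj : j ≤ n) :
    lagMoment α (X ^ j * lagMonicPoly α n) = if j = n then lagNormSq α n else 0 := by
  set Q := (ascPochhammer ℝ j).comp (X + C (α + 1))
  have hterm : ∀ k, lagMoment α (X ^ j * (C (lagCoeff α n k) * X ^ k)) =
      (ascPochhammer ℝ n).eval (α + 1) * ((-1) ^ (n + k) * n.choose k * Q.eval (k : ℝ)) := by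
    intro k
    have hsplit := congrArg (eval (α + 1)) (ascPochhammer_mul ℝ k j)
    simp only [eval_mul, eval_comp, eval_add, eval_X, eval_natCast] at hsplit
    have hk := (ascPochhammer_eval_add_one_pos hα k).ne'
    rw [← mul_assoc, mul_comm (X ^ j), mul_assoc, ← pow_add, C_mul_X_pow_eq_monomial,
      lagMoment_monomial, add_comm j, ← hsplit, lagCoeff]
    simp only [Q, eval_comp, eval_add, eval_X, eval_C]
    field_simp
    ring_nf
  rw [lagMonicPoly, mul_sum, map_sum, sum_congr rfl fun k _ => hterm k, ← mul_sum,
    sum_range_neg_one_pow_mul_choose_mul_eval Q ?_, coeff_ascPochhammer_comp_X_add_C hj,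
    lagNormSq]
  · split_ifs <;> ring
  · rw [natDegree_comp, ascPochhammer_natDegree, natDegree_X_add_C, mul_one]
    exact hj

theorem lagMoment_mul_lagMonicPoly (hα : -1 < α) {P : ℝ[X]} {n : ℕ} (hP : P.natDegree ≤ n) :
    lagMoment α (P * lagMonicPoly α n) = P.coeff n * lagNormSq α n := by
  conv_lhs => rw [as_sum_range_C_mul_X_pow' P (Nat.lt_succ_of_le hP)]
  rw [sum_mul, map_sum, sum_congr rfl fun j hj => by
    rw [mul_assoc, ← smul_eq_C_mul, map_smul,
      lagMoment_X_pow_mul_lagMonicPoly hα (Nat.le_of_lt_succ (mem_range.1 hj))]]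
  simp

theorem lagMoment_lagMonicPoly_mul_lagMonicPoly (hα : -1 < α) (a b : ℕ) :
    lagMoment α (lagMonicPoly α a * lagMonicPoly α b) = if a = b then lagNormSq α a else 0 := by
  wlog hab : a ≤ b generalizing a b
  · rw [mul_comm, this b a (by omega)]
    simp only [eq_comm]
    split_ifs with h <;> simp [h]
  rw [lagMoment_mul_lagMonicPoly hα ((natDegree_lagMonicPoly_le α a).trans hab)]
  split_ifs with h
  · rw [h, coeff_lagMonicPoly_self hα, one_mul]
  · rw [coeff_eq_zero_of_natDegree_lt ((natDegree_lagMonicPoly_le α a).trans_lt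
      (lt_of_le_of_ne hab h)), zero_mul]

theorem lagMoment_derivative_lagQPoly_mul (hα : -1 < α) (a b : ℕ) :
    lagMoment α (derivative (lagQPoly α a) * derivative (lagQPoly α b)) =
      if a = b then (a : ℝ) ^ 2 * lagNormSq α (a - 1) else 0 := by
  rw [derivative_lagQPoly hα, derivative_lagQPoly hα, mul_mul_mul_comm, ← C_mul, ← smul_eq_C_mul,
    map_smul, lagMoment_lagMonicPoly_mul_lagMonicPoly hα, smul_eq_mul]
  by_cases hab : a = b
  · subst hab
    rw [if_pos rfl, if_pos rfl]
    ring
  · rw [if_neg hab]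
    split_ifs with h
    · obtain rfl | rfl : a = 0 ∨ b = 0 := by omega
      all_goals simp
    · rw [mul_zero]

theorem lagMoment_lagQPoly_succ_mul (hα : -1 < α) (m : ℕ) :
    lagMoment α (lagQPoly α (m + 1) * lagQPoly α m) = (m + 1) * lagNormSq α m := by
  have hdeg := natDegree_lagQPoly_le α m
  rw [lagQPoly, Nat.add_sub_cancel, add_mul, mul_assoc, mul_comm _ (lagQPoly α m),
    mul_comm (lagMonicPoly α m), map_add, ← smul_eq_C_mul, map_smul,
    lagMoment_mul_lagMonicPoly hα (hdeg.trans m.le_succ), lagMoment_mul_lagMonicPoly hα hdeg,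
    coeff_eq_zero_of_natDegree_lt (hdeg.trans_lt m.lt_succ_self), coeff_lagQPoly_self hα]
  push_cast
  ring

end LaguerreMoments

section LaguerreIntegrals

variable {α : ℝ}

theorem integrableOn_eval_mul_rpow_mul_exp_neg (hα : -1 < α) (P : ℝ[X]) :
    IntegrableOn (fun x => P.eval x * (x ^ α * Real.exp (-x))) (Set.Ioi 0) := by
  induction P using Polynomial.induction_on' with
  | add P Q hP hQ =>
    simp only [eval_add, add_mul]
    exact hP.add hQ
  | monomial k a =>
    have hk : 0 < α + k + 1 := by linarith [k.cast_nonneg (α := ℝ)]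
    refine IntegrableOn.congr_fun (Integrable.const_mul (Real.GammaIntegral_convergent hk) a)
      (fun x hx => ?_) measurableSet_Ioi
    rw [eval_monomial, add_sub_cancel_right, Real.rpow_add (Set.mem_Ioi.1 hx), Real.rpow_natCast]
    ring

theorem integral_eval_mul_rpow_mul_exp_neg (hα : -1 < α) (P : ℝ[X]) :
    ∫ x in Set.Ioi 0, P.eval x * (x ^ α * Real.exp (-x)) = Real.Gamma (α + 1) * lagMoment α P := by
  induction P using Polynomial.induction_on' with
  | add P Q hP hQ =>
    simp only [eval_add, add_mul, map_add, mul_add]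
    rw [integral_add (integrableOn_eval_mul_rpow_mul_exp_neg hα P)
      (integrableOn_eval_mul_rpow_mul_exp_neg hα Q), hP, hQ]
  | monomial k a =>
    have hk : 0 < α + 1 + k := by linarith [k.cast_nonneg (α := ℝ)]
    rw [lagMoment_monomial, mul_left_comm,
      ← Real.Gamma_add_nat_eq_mul_ascPochhammer (by linarith : 0 < α + 1) k,
      Real.Gamma_eq_integral hk, ← integral_const_mul]
    refine setIntegral_congr_fun measurableSet_Ioi fun x hx => ?_
    rw [eval_monomial, show α + 1 + k - 1 = α + k by ring, Real.rpow_add (Set.mem_Ioi.1 hx),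
      Real.rpow_natCast]
    ring

theorem lagMoment_eq_integral (hα : -1 < α) (P : ℝ[X]) :
    lagMoment α P =
      (Real.Gamma (α + 1))⁻¹ * ∫ x in Set.Ioi 0, P.eval x * (x ^ α * Real.exp (-x)) := by
  rw [integral_eval_mul_rpow_mul_exp_neg hα,
    inv_mul_cancel_left₀ (Real.Gamma_pos_of_pos (by linarith)).ne']

end LaguerreIntegrals

theorem lagGrad_eval_mul_eval {α β : ℝ} (hα : -1 < α) (hβ : -1 < β) (P₁ Q₁ P₂ Q₂ : ℝ[X]) :
    lagGrad α β (fun x y => P₁.eval x * Q₁.eval y) (fun x y => P₂.eval x * Q₂.eval y) =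
      lagMoment α (derivative P₁ * derivative P₂) * lagMoment β (Q₁ * Q₂) +
        lagMoment α (P₁ * P₂) * lagMoment β (derivative Q₁ * derivative Q₂) := by
  have hint {γ : ℝ} (hγ : -1 < γ) (P : ℝ[X]) : Integrable
      (fun x => P.eval x * (x ^ γ * Real.exp (-x))) (volume.restrict (Set.Ioi (0 : ℝ))) :=
    integrableOn_eval_mul_rpow_mul_exp_neg hγ P
  simp only [lagMoment_eq_integral hα, lagMoment_eq_integral hβ, mul_mul_mul_comm _ _ (_⁻¹ : ℝ),
    ← mul_inv, ← mul_add, ← integral_prod_mul]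
  rw [← integral_add ((hint hα _).mul_prod (hint hβ _)) ((hint hα _).mul_prod (hint hβ _)),
    Measure.prod_restrict, ← Measure.volume_eq_prod, lagGrad, one_div]
  congr 1
  refine integral_congr_ae (Filter.Eventually.of_forall fun p => ?_)
  simp only [deriv_eval_mul_eval_left, deriv_eval_mul_eval_right, eval_mul, Real.rpow_eq_pow]
  ring

theorem lagQ2_eq_eval_mul_eval {α β : ℝ} (hα : -1 < α) (hβ : -1 < β) (n k : ℕ) :
    lagQ2 α β n k = fun x y => (lagQPoly α (n - k)).eval x * (lagQPoly β k).eval y := by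
  ext x y
  rw [lagQ2, eval_lagQPoly hα, eval_lagQPoly hβ]

theorem hkn_eq_lagNormSq_mul_lagNormSq (α β : ℝ) (k m : ℕ) :
    hkn α β k m = lagNormSq α (m - k) * lagNormSq β k := by
  rw [hkn, lagNormSq, lagNormSq]
  ring

/-- The cross Gram matrix `C_n = ⟨𝕼_{n+1}, 𝕼_n^T⟩_∇` for the product Laguerre weight is
bidiagonal with zero first and last rows: its entries are
`(C_n)_{i,i} = i²(n-i+1) h_{i-1}^{n-1}` for `1 ≤ i ≤ n` and
`(C_n)_{i+1,i} = (i+1)(n-i)² h_i^{n-1}` for `0 ≤ i ≤ n-1`, all other entries vanish. -/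
theorem lagGrad_cross_gram (α β : ℝ) (hα : -1 < α) (hβ : -1 < β) (n : ℕ)
    (i l : ℕ) (hi : i ≤ n + 1) (hl : l ≤ n) :
    lagGrad α β (lagQ2 α β (n + 1) i) (lagQ2 α β n l)
      = (if i = l then (i : ℝ) ^ 2 * ((n : ℝ) - i + 1) * hkn α β (i - 1) (n - 1) else 0)
        + (if i = l + 1 then ((l : ℝ) + 1) * ((n : ℝ) - l) ^ 2 * hkn α β l (n - 1) else 0) := by
  rw [lagQ2_eq_eval_mul_eval hα hβ, lagQ2_eq_eval_mul_eval hα hβ, lagGrad_eval_mul_eval hα hβ,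
    lagMoment_derivative_lagQPoly_mul hα, lagMoment_derivative_lagQPoly_mul hβ,
    hkn_eq_lagNormSq_mul_lagNormSq, hkn_eq_lagNormSq_mul_lagNormSq]
  obtain ⟨m, rfl⟩ := Nat.exists_eq_add_of_le hl
  rcases eq_or_ne l i with rfl | hil
  · rw [if_neg (by omega), if_pos rfl, if_pos rfl, if_neg (by omega),
      show l + m + 1 - l = m + 1 by omega, Nat.add_sub_cancel_left, lagMoment_lagQPoly_succ_mul hα]
    rcases l with _ | l
    · simp
    · rw [show l + 1 + m - 1 - (l + 1 - 1) = m by omega, Nat.add_sub_cancel]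
      push_cast
      ring
  rcases eq_or_ne i (l + 1) with rfl | hil'
  · rw [if_pos (by omega), if_neg hil.symm, if_neg hil.symm, if_pos rfl,
      show l + m + 1 - (l + 1) = m by omega, Nat.add_sub_cancel_left,
      lagMoment_lagQPoly_succ_mul hβ, show l + m - 1 - l = m - 1 by omega]
    push_cast
    ring
  · rw [if_neg (by omega), if_neg hil.symm, if_neg hil.symm, if_neg hil']
    ring
end

section
/- For the product Laguerre weight with α = β = 0, the monic Sobolev-type orthogonal polynomials S_k^n for the gradient form ⟨·,·⟩_∇ satisfy the symmetry S_{n-k}^n(x,y) = S_k^n(y,x) for 0 ≤ k ≤ n; in particular S_0^2(x,y) = x(x-2), S_1^2(x,y) = xy - x - y, S_0^3(x,y) = x(x² - 6x + 6), and S_1^3(x,y) = x²y - x² - 3xy + 3x + y are mutually ∇-orthogonal and orthogonal to all polynomials of lower degree. -/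
/-!
On polynomials `⟨P, Q⟩_∇ = L(∂ₓP ∂ₓQ + ∂ᵧP ∂ᵧQ)` for the moment functional `L(xᵃ yᵇ) = a! b!`
(Fubini and Euler's integral `∫₀^∞ xⁿ e^{-x} dx = n!`). The quarter plane and the weight `e^{-x-y}`
are invariant under `(x, y) ↦ (y, x)`, hence so is `L`, and the swap is an isometry of `⟨·,·⟩_∇`
that preserves total degree and sends `x^{n-k} y^k` to `x^k y^{n-k}`: this is the symmetry.
On monomials the form is explicit,
`⟨c xᵃ yᵇ, c' x^{a'} y^{b'}⟩_∇ = c c' (a a' (a+a'-2)! (b+b')! + b b' (a+a')! (b+b'-2)!)`,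
which checks the four polynomials against all monomials of lower degree and the two pairs of equal
degree against each other; in different degrees orthogonality is part of being an `S_k^n`.
-/

open MeasureTheory MvPolynomial

/-- The gradient bilinear form for the product Laguerre weight with `α = β = 0`:
`⟨f,g⟩_∇ = ∬_{[0,∞)²} ∇f·∇g e^{-x-y} dx dy`. -/
noncomputable def grad00 (f g : ℝ → ℝ → ℝ) : ℝ :=
  ∫ p in (Set.Ioi (0 : ℝ)) ×ˢ (Set.Ioi (0 : ℝ)),
    (deriv (fun t => f t p.2) p.1 * deriv (fun t => g t p.2) p.1 +
      deriv (fun t => f p.1 t) p.2 * deriv (fun t => g p.1 t) p.2) *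
    Real.exp (-p.1 - p.2)

/-- `P` is a monic Sobolev-type orthogonal polynomial `S_k^n`: it has leading term
`x^{n-k} y^k` and is `∇`-orthogonal to all polynomials of total degree `≤ n-1`. -/
def IsSob (n k : ℕ) (P : MvPolynomial (Fin 2) ℝ) : Prop :=
  (P - X 0 ^ (n - k) * X 1 ^ k).totalDegree < n ∧
  ∀ Q : MvPolynomial (Fin 2) ℝ, Q.totalDegree < n → grad00 (pev P) (pev Q) = 0

open Real Set

theorem hasDerivAt_eval_update {σ : Type*} [DecidableEq σ] (P : MvPolynomial σ ℝ) (x : σ → ℝ)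
    (i : σ) :
    HasDerivAt (fun t => eval (Function.update x i t) P) (eval x (pderiv i P)) (x i) := by
  induction P using MvPolynomial.induction_on with
  | C a => simpa using hasDerivAt_const (x i) a
  | add p q hp hq => simpa using hp.fun_add hq
  | mul_X p j hp =>
    simp only [map_mul, eval_X, Derivation.leibniz, pderiv_X, smul_eq_mul]
    by_cases hij : j = i
    · subst hij
      simpa [add_comm, mul_comm] using hp.fun_mul (hasDerivAt_id' (x j))
    · simpa [hij, Ne.symm hij, mul_comm] using hp.mul_const (x j)

theorem deriv_pev_fst (P : MvPolynomial (Fin 2) ℝ) (x y : ℝ) :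
    deriv (fun t => pev P t y) x = pev (pderiv 0 P) x y := by
  have hupdate (t : ℝ) : Function.update ![x, y] 0 t = ![t, y] := by
    ext i; fin_cases i <;> rfl
  simpa [pev, hupdate] using (hasDerivAt_eval_update P ![x, y] 0).deriv

theorem deriv_pev_snd (P : MvPolynomial (Fin 2) ℝ) (x y : ℝ) :
    deriv (fun t => pev P x t) y = pev (pderiv 1 P) x y := by
  have hupdate (t : ℝ) : Function.update ![x, y] 1 t = ![x, t] := by
    ext i; fin_cases i <;> rfl
  simpa [pev, hupdate] using (hasDerivAt_eval_update P ![x, y] 1).deriv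

theorem grad00_comm (f g : ℝ → ℝ → ℝ) : grad00 f g = grad00 g f := by
  simp only [grad00, mul_comm (deriv (fun t => f _ _) _)]

theorem integrableOn_pow_mul_exp_neg_Ioi (n : ℕ) :
    IntegrableOn (fun x : ℝ => x ^ n * exp (-x)) (Ioi 0) := by
  simpa [mul_comm] using GammaIntegral_convergent (s := n + 1) (by positivity)

theorem integral_pow_mul_exp_neg_Ioi (n : ℕ) :
    ∫ x in Ioi (0 : ℝ), x ^ n * exp (-x) = n.factorial := by
  simpa [mul_comm] using (Gamma_eq_integral (s := n + 1) (by positivity)).symm.trans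
    (Gamma_nat_eq_factorial n)

noncomputable def laguerreMoment : MvPolynomial (Fin 2) ℝ →ₗ[ℝ] ℝ :=
  (basisMonomials (Fin 2) ℝ).constr ℝ fun m => ((m 0).factorial * (m 1).factorial : ℝ)

theorem laguerreMoment_monomial (m : Fin 2 →₀ ℕ) (c : ℝ) :
    laguerreMoment (monomial m c) = c * ((m 0).factorial * (m 1).factorial) := by
  have h := (basisMonomials (Fin 2) ℝ).constr_basis ℝ
    (fun m => ((m 0).factorial * (m 1).factorial : ℝ)) m
  simp only [coe_basisMonomials] at h
  calc laguerreMoment (monomial m c) = laguerreMoment (c • monomial m 1) := by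
        rw [smul_monomial, smul_eq_mul, mul_one]
    _ = _ := by rw [map_smul, laguerreMoment, h, smul_eq_mul]

theorem laguerreMoment_rename_swap (P : MvPolynomial (Fin 2) ℝ) :
    laguerreMoment (rename (Equiv.swap 0 1) P) = laguerreMoment P := by
  induction P using MvPolynomial.induction_on' with
  | monomial m c =>
    simp [rename_monomial, laguerreMoment_monomial, Finsupp.mapDomain_equiv_apply, mul_comm]
  | add p q hp hq => simp only [map_add, hp, hq]

theorem integrableOn_pev_mul_exp_and_integral_eq (P : MvPolynomial (Fin 2) ℝ) :
    IntegrableOn (fun p : ℝ × ℝ => pev P p.1 p.2 * exp (-p.1 - p.2)) (Ioi 0 ×ˢ Ioi 0) ∧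
    ∫ p in Ioi 0 ×ˢ Ioi 0, pev P p.1 p.2 * exp (-p.1 - p.2) = laguerreMoment P := by
  rw [IntegrableOn, Measure.volume_eq_prod, ← Measure.prod_restrict]
  induction P using MvPolynomial.induction_on' with
  | monomial m c =>
    have hsplit : (fun p : ℝ × ℝ => pev (monomial m c) p.1 p.2 * exp (-p.1 - p.2)) =
        fun p => (c * (p.1 ^ m 0 * exp (-p.1))) * (p.2 ^ m 1 * exp (-p.2)) := by
      funext p
      simp [pev, eval_monomial, Finsupp.prod_fintype, Fin.prod_univ_two, sub_eq_add_neg, exp_add]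
      ring
    rw [hsplit, laguerreMoment_monomial]
    refine ⟨((integrableOn_pow_mul_exp_neg_Ioi _).const_mul c).mul_prod
      (integrableOn_pow_mul_exp_neg_Ioi _), ?_⟩
    rw [integral_prod_mul (fun x => c * (x ^ m 0 * exp (-x))) (fun y => y ^ m 1 * exp (-y)),
      integral_const_mul, integral_pow_mul_exp_neg_Ioi, integral_pow_mul_exp_neg_Ioi, mul_assoc]
  | add p q hp hq =>
    have hsum : (fun x : ℝ × ℝ => pev (p + q) x.1 x.2 * exp (-x.1 - x.2)) = fun x =>
        pev p x.1 x.2 * exp (-x.1 - x.2) + pev q x.1 x.2 * exp (-x.1 - x.2) := by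
      funext x; simp [pev, add_mul]
    rw [hsum, integral_add hp.1 hq.1, hp.2, hq.2, map_add]
    exact ⟨hp.1.add hq.1, rfl⟩

noncomputable def sobolevForm : LinearMap.BilinForm ℝ (MvPolynomial (Fin 2) ℝ) :=
  LinearMap.mk₂ ℝ
    (fun P Q => laguerreMoment (pderiv 0 P * pderiv 0 Q + pderiv 1 P * pderiv 1 Q))
    (fun _ _ _ => by simp only [map_add, add_mul]; ring)
    (fun _ _ _ => by simp only [Derivation.map_smul, smul_mul_assoc, ← smul_add, map_smul])
    (fun _ _ _ => by simp only [map_add, mul_add]; ring)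
    (fun _ _ _ => by simp only [Derivation.map_smul, mul_smul_comm, ← smul_add, map_smul])

theorem sobolevForm_apply (P Q : MvPolynomial (Fin 2) ℝ) :
    sobolevForm P Q = laguerreMoment (pderiv 0 P * pderiv 0 Q + pderiv 1 P * pderiv 1 Q) :=
  rfl

theorem grad00_pev_eq_sobolevForm (P Q : MvPolynomial (Fin 2) ℝ) :
    grad00 (pev P) (pev Q) = sobolevForm P Q := by
  rw [grad00, sobolevForm_apply, ← (integrableOn_pev_mul_exp_and_integral_eq _).2]
  simp only [deriv_pev_fst, deriv_pev_snd]
  simp only [pev, map_add, map_mul]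

theorem sobolevForm_rename_swap (P Q : MvPolynomial (Fin 2) ℝ) :
    sobolevForm (rename (Equiv.swap 0 1) P) Q = sobolevForm P (rename (Equiv.swap 0 1) Q) := by
  have hpderiv (i : Fin 2) (R : MvPolynomial (Fin 2) ℝ) :
      pderiv i (rename (Equiv.swap 0 1) R) =
        rename (Equiv.swap 0 1) (pderiv (Equiv.swap (0 : Fin 2) 1 i) R) := by
    have h := pderiv_rename (Equiv.swap (0 : Fin 2) 1).injective (Equiv.swap 0 1 i) R
    rwa [Equiv.swap_apply_self] at h
  have hinvol (R : MvPolynomial (Fin 2) ℝ) :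
      rename (Equiv.swap 0 1) (rename (Equiv.swap (0 : Fin 2) 1) R) = R := by
    rw [rename_rename, Function.Involutive.comp_self (Equiv.swap_apply_self 0 1), rename_id_apply]
  rw [sobolevForm_apply, sobolevForm_apply, ← laguerreMoment_rename_swap (pderiv 0 P * _ + _)]
  simp only [hpderiv, map_add, map_mul, hinvol, Equiv.swap_apply_left, Equiv.swap_apply_right]
  rw [add_comm]

noncomputable def biMonomial (a b : ℕ) (c : ℝ) : MvPolynomial (Fin 2) ℝ :=
  monomial (Finsupp.single 0 a + Finsupp.single 1 b) c

theorem biMonomial_eq (a b : ℕ) (c : ℝ) : biMonomial a b c = C c * X 0 ^ a * X 1 ^ b := by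
  simp [biMonomial, monomial_eq, Finsupp.prod_fintype, Fin.prod_univ_two, mul_assoc]

theorem biMonomial_one (a b : ℕ) : biMonomial a b 1 = X 0 ^ a * X 1 ^ b := by
  simp [biMonomial_eq]

theorem monomial_eq_biMonomial (m : Fin 2 →₀ ℕ) (c : ℝ) :
    monomial m c = biMonomial (m 0) (m 1) c := by
  have hm : m = Finsupp.single 0 (m 0) + Finsupp.single 1 (m 1) := by
    ext i; fin_cases i <;> simp
  rw [biMonomial, ← hm]

theorem pderiv_zero_biMonomial (a b : ℕ) (c : ℝ) :
    pderiv 0 (biMonomial a b c) = biMonomial (a - 1) b (c * a) := by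
  rw [biMonomial, pderiv_monomial, monomial_eq_biMonomial]; simp

theorem pderiv_one_biMonomial (a b : ℕ) (c : ℝ) :
    pderiv 1 (biMonomial a b c) = biMonomial a (b - 1) (c * b) := by
  rw [biMonomial, pderiv_monomial, monomial_eq_biMonomial]; simp

theorem biMonomial_mul (a b a' b' : ℕ) (c c' : ℝ) :
    biMonomial a b c * biMonomial a' b' c' = biMonomial (a + a') (b + b') (c * c') := by
  rw [biMonomial, biMonomial, monomial_mul, monomial_eq_biMonomial]; simp

theorem laguerreMoment_biMonomial (a b : ℕ) (c : ℝ) :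
    laguerreMoment (biMonomial a b c) = c * (a.factorial * b.factorial) := by
  simp [biMonomial, laguerreMoment_monomial]

theorem totalDegree_biMonomial_lt {a b n : ℕ} (c : ℝ) (h : a + b < n) :
    (biMonomial a b c).totalDegree < n :=
  (totalDegree_monomial_le _ _).trans_lt (by simpa [Finsupp.sum_fintype] using h)

theorem totalDegree_add_lt {σ R : Type*} [CommSemiring R] {p q : MvPolynomial σ R} {n : ℕ}
    (hp : p.totalDegree < n) (hq : q.totalDegree < n) : (p + q).totalDegree < n :=
  (totalDegree_add p q).trans_lt (max_lt hp hq)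

/-- Where `a a' = 0` (resp. `b b' = 0`) the truncated subtraction `a + a' - 2` is harmless. -/
theorem sobolevForm_biMonomial (a b a' b' : ℕ) (c c' : ℝ) :
    sobolevForm (biMonomial a b c) (biMonomial a' b' c') =
      c * c' * (a * a' * ((a + a' - 2).factorial * (b + b').factorial) +
        b * b' * ((a + a').factorial * (b + b' - 2).factorial)) := by
  have hfact (d e : ℕ) :
      (d * e * (d - 1 + (e - 1)).factorial : ℝ) = d * e * (d + e - 2).factorial := by
    obtain _ | d := d
    · simp
    obtain _ | e := e
    · simp
    rw [show d + 1 + (e + 1) - 2 = d + 1 - 1 + (e + 1 - 1) by omega]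
  rw [sobolevForm_apply, pderiv_zero_biMonomial, pderiv_zero_biMonomial, pderiv_one_biMonomial,
    pderiv_one_biMonomial, biMonomial_mul, biMonomial_mul, map_add, laguerreMoment_biMonomial,
    laguerreMoment_biMonomial]
  linear_combination (c * c' * (b + b').factorial) * hfact a a' +
    (c * c' * (a + a').factorial) * hfact b b'

theorem sobolevForm_eq_zero_of_totalDegree_lt {P Q : MvPolynomial (Fin 2) ℝ} {n : ℕ}
    (hP : ∀ a b c, a + b < n → sobolevForm P (biMonomial a b c) = 0) (hQ : Q.totalDegree < n) :
    sobolevForm P Q = 0 := by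
  rw [Q.as_sum, map_sum]
  refine Finset.sum_eq_zero fun m hm => ?_
  have hdeg : m 0 + m 1 < n := by
    simpa [Finsupp.sum_fintype] using (le_totalDegree hm).trans_lt hQ
  rw [monomial_eq_biMonomial]
  exact hP _ _ _ hdeg

theorem IsSob.of_eq_biMonomial_add {n k : ℕ} {P R : MvPolynomial (Fin 2) ℝ}
    (hP : P = biMonomial (n - k) k 1 + R) (hR : R.totalDegree < n)
    (horth : ∀ a < n, ∀ b < n, a + b < n → ∀ c, sobolevForm P (biMonomial a b c) = 0) :
    IsSob n k P := by
  refine ⟨by rwa [hP, biMonomial_one, add_sub_cancel_left], fun Q hQ => ?_⟩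
  rw [grad00_pev_eq_sobolevForm]
  exact sobolevForm_eq_zero_of_totalDegree_lt
    (fun a b c hab => horth a (by omega) b (by omega) hab c) hQ

theorem IsSob.totalDegree_le {n k : ℕ} {P : MvPolynomial (Fin 2) ℝ} (hP : IsSob n k P)
    (hk : k ≤ n) : P.totalDegree ≤ n := by
  have hlead : (X 0 ^ (n - k) * X 1 ^ k : MvPolynomial (Fin 2) ℝ).totalDegree ≤ n :=
    (totalDegree_mul _ _).trans (by simp [totalDegree_X_pow, hk])
  rw [← sub_add_cancel P (X 0 ^ (n - k) * X 1 ^ k)]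
  exact (totalDegree_add _ _).trans (max_le hP.1.le hlead)

theorem IsSob.grad00_eq_zero {n k m j : ℕ} {P Q : MvPolynomial (Fin 2) ℝ} (hP : IsSob n k P)
    (hQ : IsSob m j Q) (hj : j ≤ m) (hmn : m < n) : grad00 (pev P) (pev Q) = 0 :=
  hP.2 Q ((hQ.totalDegree_le hj).trans_lt hmn)

theorem IsSob.rename_swap {n k : ℕ} {P : MvPolynomial (Fin 2) ℝ} (hP : IsSob n k P)
    (hk : k ≤ n) : IsSob n (n - k) (rename (Equiv.swap 0 1) P) := by
  refine ⟨?_, fun Q hQ => ?_⟩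
  · have hlead : rename (Equiv.swap 0 1) P - X 0 ^ (n - (n - k)) * X 1 ^ (n - k) =
        rename (Equiv.swap 0 1) (P - X 0 ^ (n - k) * X 1 ^ k) := by
      simp [Nat.sub_sub_self hk, mul_comm]
    exact hlead ▸ (totalDegree_rename_le _ _).trans_lt hP.1
  · rw [grad00_pev_eq_sobolevForm, sobolevForm_rename_swap, ← grad00_pev_eq_sobolevForm]
    exact hP.2 _ ((totalDegree_rename_le _ _).trans_lt hQ)

-- `Sₙₖ` is the paper's `S_k^n`.
noncomputable def S₂₀ : MvPolynomial (Fin 2) ℝ := X 0 ^ 2 - C 2 * X 0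

noncomputable def S₂₁ : MvPolynomial (Fin 2) ℝ := X 0 * X 1 - X 0 - X 1

noncomputable def S₃₀ : MvPolynomial (Fin 2) ℝ := X 0 ^ 3 - C 6 * X 0 ^ 2 + C 6 * X 0

noncomputable def S₃₁ : MvPolynomial (Fin 2) ℝ :=
  X 0 ^ 2 * X 1 - X 0 ^ 2 - C 3 * (X 0 * X 1) + C 3 * X 0 + X 1

theorem S₂₀_eq : S₂₀ = biMonomial 2 0 1 + biMonomial 1 0 (-2) := by
  simp [S₂₀, biMonomial_eq]; ring

theorem S₂₁_eq : S₂₁ = biMonomial 1 1 1 + (biMonomial 1 0 (-1) + biMonomial 0 1 (-1)) := by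
  simp [S₂₁, biMonomial_eq]; ring

theorem S₃₀_eq : S₃₀ = biMonomial 3 0 1 + (biMonomial 2 0 (-6) + biMonomial 1 0 6) := by
  simp [S₃₀, biMonomial_eq]; ring

theorem S₃₁_eq : S₃₁ = biMonomial 2 1 1 +
    (biMonomial 2 0 (-1) + biMonomial 1 1 (-3) + biMonomial 1 0 3 + biMonomial 0 1 1) := by
  simp [S₃₁, biMonomial_eq]; ring

theorem isSob_S₂₀ : IsSob 2 0 S₂₀ := by
  refine .of_eq_biMonomial_add S₂₀_eq (totalDegree_biMonomial_lt _ (by norm_num))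
    fun a ha b hb hab c => ?_
  rw [S₂₀_eq]
  interval_cases a <;> interval_cases b <;> first | omega | simp [sobolevForm_biMonomial] <;> ring

theorem isSob_S₂₁ : IsSob 2 1 S₂₁ := by
  refine .of_eq_biMonomial_add S₂₁_eq
    (by apply_rules [totalDegree_add_lt, totalDegree_biMonomial_lt] <;> norm_num)
    fun a ha b hb hab c => ?_
  rw [S₂₁_eq]
  interval_cases a <;> interval_cases b <;> first | omega | simp [sobolevForm_biMonomial]

theorem isSob_S₃₀ : IsSob 3 0 S₃₀ := by
  refine .of_eq_biMonomial_add S₃₀_eq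
    (by apply_rules [totalDegree_add_lt, totalDegree_biMonomial_lt] <;> norm_num)
    fun a ha b hb hab c => ?_
  rw [S₃₀_eq]
  interval_cases a <;> interval_cases b <;>
    first | omega | simp [sobolevForm_biMonomial, Nat.factorial] <;> ring

theorem isSob_S₃₁ : IsSob 3 1 S₃₁ := by
  refine .of_eq_biMonomial_add S₃₁_eq
    (by apply_rules [totalDegree_add_lt, totalDegree_biMonomial_lt] <;> norm_num)
    fun a ha b hb hab c => ?_
  rw [S₃₁_eq]
  interval_cases a <;> interval_cases b <;>
    first | omega | simp [sobolevForm_biMonomial, Nat.factorial] <;> ring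

theorem grad00_S₂₀_S₂₁ : grad00 (pev S₂₀) (pev S₂₁) = 0 := by
  rw [grad00_pev_eq_sobolevForm, S₂₀_eq, S₂₁_eq]
  simp [sobolevForm_biMonomial]

theorem grad00_S₃₀_S₃₁ : grad00 (pev S₃₀) (pev S₃₁) = 0 := by
  rw [grad00_pev_eq_sobolevForm, S₃₀_eq, S₃₁_eq]
  simp [sobolevForm_biMonomial, Nat.factorial]


theorem pairwise_grad00_S_eq_zero :
    ({S₂₀, S₂₁, S₃₀, S₃₁} : Set (MvPolynomial (Fin 2) ℝ)).Pairwise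
      fun P Q => grad00 (pev P) (pev Q) = 0 := by
  have : Std.Symm fun P Q : MvPolynomial (Fin 2) ℝ => grad00 (pev P) (pev Q) = 0 :=
    ⟨fun P Q h => (grad00_comm _ _).trans h⟩
  simp only [Set.pairwise_insert_of_symm, Set.pairwise_singleton, Set.mem_insert_iff,
    Set.mem_singleton_iff, forall_eq_or_imp, forall_eq, true_and]
  refine ⟨⟨fun _ => grad00_S₃₀_S₃₁, fun _ => ?_, fun _ => ?_⟩, fun _ => grad00_S₂₀_S₂₁,
    fun _ => ?_, fun _ => ?_⟩ <;> rw [grad00_comm]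
  · exact isSob_S₃₀.grad00_eq_zero isSob_S₂₁ (by norm_num) (by norm_num)
  · exact isSob_S₃₁.grad00_eq_zero isSob_S₂₁ (by norm_num) (by norm_num)
  · exact isSob_S₃₀.grad00_eq_zero isSob_S₂₀ (by norm_num) (by norm_num)
  · exact isSob_S₃₁.grad00_eq_zero isSob_S₂₀ (by norm_num) (by norm_num)

/-- For `α = β = 0`, the monic Sobolev-type orthogonal polynomials satisfy the symmetry
`S_{n-k}^n(x,y) = S_k^n(y,x)`; in particular `S_0^2 = x(x-2)`, `S_1^2 = xy - x - y`,
`S_0^3 = x(x²-6x+6)` and `S_1^3 = x²y - x² - 3xy + 3x + y` are `∇`-orthogonal to all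
polynomials of lower degree, and mutually `∇`-orthogonal. -/
theorem laguerre_sobolev_symmetric :
    -- symmetry: swapping the variables of an `S_k^n` yields an `S_{n-k}^n`
    (∀ n k : ℕ, k ≤ n → ∀ P : MvPolynomial (Fin 2) ℝ, IsSob n k P →
      IsSob n (n - k) (MvPolynomial.rename (Equiv.swap (0 : Fin 2) 1) P)) ∧
    -- the explicit low-degree Sobolev orthogonal polynomials
    IsSob 2 0 (X 0 ^ 2 - C 2 * X 0) ∧
    IsSob 2 1 (X 0 * X 1 - X 0 - X 1) ∧
    IsSob 3 0 (X 0 ^ 3 - C 6 * X 0 ^ 2 + C 6 * X 0) ∧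
    IsSob 3 1 (X 0 ^ 2 * X 1 - X 0 ^ 2 - C 3 * (X 0 * X 1) + C 3 * X 0 + X 1) ∧
    -- mutual `∇`-orthogonality of the four listed polynomials
    (∀ P₁ P₂ : MvPolynomial (Fin 2) ℝ,
      P₁ ∈ ({X 0 ^ 2 - C 2 * X 0, X 0 * X 1 - X 0 - X 1,
             X 0 ^ 3 - C 6 * X 0 ^ 2 + C 6 * X 0,
             X 0 ^ 2 * X 1 - X 0 ^ 2 - C 3 * (X 0 * X 1) + C 3 * X 0 + X 1} :
             Set (MvPolynomial (Fin 2) ℝ)) →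
      P₂ ∈ ({X 0 ^ 2 - C 2 * X 0, X 0 * X 1 - X 0 - X 1,
             X 0 ^ 3 - C 6 * X 0 ^ 2 + C 6 * X 0,
             X 0 ^ 2 * X 1 - X 0 ^ 2 - C 3 * (X 0 * X 1) + C 3 * X 0 + X 1} :
             Set (MvPolynomial (Fin 2) ℝ)) →
      P₁ ≠ P₂ → grad00 (pev P₁) (pev P₂) = 0) := by
  exact ⟨fun n k hk P hP => hP.rename_swap hk, isSob_S₂₀, isSob_S₂₁, isSob_S₃₀, isSob_S₃₁,
    fun P₁ P₂ h₁ h₂ => pairwise_grad00_S_eq_zero h₁ h₂⟩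
end
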